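/- arXiv:2404.18268 — 2 statements merged into one kernel-verified Lean document; each statement's English description precedes it below -/
import Mathlib

section
/- Suppose (x_s, x, x_t) is an integer feasible flow in the network representation of the allocation problem whose cost ∑_j ∑_i (-(Y j i)) * (x j i : ℝ) is minimal among the costs of all integer feasible flows. Then the induced allocation D j i := x j i is a valid allocation whose value ∑_j ∑_i (Y j i) * (D j i : ℝ) is maximal among the values of all valid allocations. -/
/-- An integer feasible flow of minimal cost induces a valid
allocation of maximal value. -/
theorem minCostFlow_gives_optimal_allocation
    {n₁ n₂ m : ℕ} (Y : Fin n₁ → Fin n₂ → ℝ)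
    (x_s : Fin n₁ → ℕ) (x : Fin n₁ → Fin n₂ → ℕ) (x_t : Fin n₂ → ℕ)
    (hs : ∀ j, x_s j ≤ m)
    (hcap : ∀ j i, x j i ≤ 1)
    (ht : ∀ i, x_t i = 1)
    (hconsS : ∀ j, x_s j = ∑ i, x j i)
    (hconsT : ∀ i, ∑ j, x j i = x_t i)
    (hmin : ∀ (y_s : Fin n₁ → ℕ) (y : Fin n₁ → Fin n₂ → ℕ) (y_t : Fin n₂ → ℕ),
      (∀ j, y_s j ≤ m) → (∀ j i, y j i ≤ 1) → (∀ i, y_t i = 1) →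
      (∀ j, y_s j = ∑ i, y j i) → (∀ i, ∑ j, y j i = y_t i) →
      ∑ j, ∑ i, (-(Y j i)) * (x j i : ℝ) ≤ ∑ j, ∑ i, (-(Y j i)) * (y j i : ℝ)) :
    (∀ j i, x j i ≤ 1) ∧
    (∀ i, ∑ j, x j i = 1) ∧
    (∀ j, ∑ i, x j i ≤ m) ∧
    (∀ D : Fin n₁ → Fin n₂ → ℕ,
      (∀ j i, D j i ≤ 1) → (∀ i, ∑ j, D j i = 1) → (∀ j, ∑ i, D j i ≤ m) →
      ∑ j, ∑ i, (Y j i) * (D j i : ℝ) ≤ ∑ j, ∑ i, (Y j i) * (x j i : ℝ)) := by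
  refine ⟨hcap, fun i => (hconsT i).trans (ht i), fun j => (hconsS j) ▸ hs j, ?_⟩
  intro D hD1 hD2 hD3
  have h := hmin (fun j => ∑ i, D j i) D (fun _ => 1) hD3 hD1 (fun _ => rfl)
    (fun _ => rfl) hD2
  have h2 : ∑ j, ∑ i, -(Y j i) * (x j i : ℝ) = -∑ j, ∑ i, Y j i * (x j i : ℝ) := by
    simp [Finset.sum_neg_distrib, neg_mul]
  have h3 : ∑ j, ∑ i, -(Y j i) * (D j i : ℝ) = -∑ j, ∑ i, Y j i * (D j i : ℝ) := by
    simp [Finset.sum_neg_distrib, neg_mul]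
  rw [h2, h3] at h
  linarith
end

section
/- Let D be a valid allocation for the allocation problem with n₁ treatments, n₂ recipients and capacity m, and suppose recipients i₁ ≠ i₂ are allocated treatments j₂ and j₁ respectively (D j₂ i₁ = 1 and D j₁ i₂ = 1) with j₁ ≠ j₂, and that Y j₁ i₁ + Y j₂ i₂ > Y j₁ i₂ + Y j₂ i₁. Then the allocation D' obtained from D by swapping the treatments of i₁ and i₂ (D' j₁ i₁ = 1, D' j₂ i₂ = 1, D' j₂ i₁ = 0, D' j₁ i₂ = 0, and D' = D elsewhere) is a valid allocation with strictly larger value: ∑_j ∑_i (Y j i) * (D' j i : ℝ) > ∑_j ∑_i (Y j i) * (D j i : ℝ). -/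
/-- Swapping the treatments of two recipients strictly improves
the value of a valid allocation when the sum of outcomes under the swapped
assignment is strictly larger. -/
theorem swap_improves_allocation
    {n₁ n₂ m : ℕ} (Y : Fin n₁ → Fin n₂ → ℝ)
    (D D' : Fin n₁ → Fin n₂ → ℕ)
    (hD1 : ∀ j i, D j i ≤ 1)
    (hD2 : ∀ i, ∑ j, D j i = 1)
    (hD3 : ∀ j, ∑ i, D j i ≤ m)
    (i₁ i₂ : Fin n₂) (j₁ j₂ : Fin n₁)
    (hi : i₁ ≠ i₂) (hj : j₁ ≠ j₂)
    (hD21 : D j₂ i₁ = 1) (hD12 : D j₁ i₂ = 1)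
    (hgain : Y j₁ i₁ + Y j₂ i₂ > Y j₁ i₂ + Y j₂ i₁)
    (h'11 : D' j₁ i₁ = 1) (h'22 : D' j₂ i₂ = 1)
    (h'21 : D' j₂ i₁ = 0) (h'12 : D' j₁ i₂ = 0)
    (h'eq : ∀ j i, ¬((j = j₁ ∨ j = j₂) ∧ (i = i₁ ∨ i = i₂)) → D' j i = D j i) :
    (∀ j i, D' j i ≤ 1) ∧
    (∀ i, ∑ j, D' j i = 1) ∧
    (∀ j, ∑ i, D' j i ≤ m) ∧
    (∑ j, ∑ i, (Y j i) * (D' j i : ℝ) > ∑ j, ∑ i, (Y j i) * (D j i : ℝ)) := by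
  -- derived zeros
  have hpair1 : D j₁ i₁ + D j₂ i₁ ≤ 1 := by
    have h := Finset.sum_le_sum_of_subset
      (Finset.subset_univ ({j₁, j₂} : Finset (Fin n₁))) (f := fun j => D j i₁)
    rw [Finset.sum_pair hj, hD2 i₁] at h
    exact h
  have hD11 : D j₁ i₁ = 0 := by omega
  have hpair2 : D j₁ i₂ + D j₂ i₂ ≤ 1 := by
    have h := Finset.sum_le_sum_of_subset
      (Finset.subset_univ ({j₁, j₂} : Finset (Fin n₁))) (f := fun j => D j i₂)
    rw [Finset.sum_pair hj, hD2 i₂] at h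
    exact h
  have hD22 : D j₂ i₂ = 0 := by omega
  -- rows of D' are rows of D, with i₁ and i₂ swapped (for rows j₁, j₂)
  have hrow1 : ∀ i, D' j₁ i = D j₁ (Equiv.swap i₁ i₂ i) := by
    intro i
    by_cases h1 : i = i₁
    · subst h1; rw [Equiv.swap_apply_left, h'11, hD12]
    by_cases h2 : i = i₂
    · subst h2; rw [Equiv.swap_apply_right, h'12, hD11]
    · rw [Equiv.swap_apply_of_ne_of_ne h1 h2]
      exact h'eq _ _ (by tauto)
  have hrow2 : ∀ i, D' j₂ i = D j₂ (Equiv.swap i₁ i₂ i) := by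
    intro i
    by_cases h1 : i = i₁
    · subst h1; rw [Equiv.swap_apply_left, h'21, hD22]
    by_cases h2 : i = i₂
    · subst h2; rw [Equiv.swap_apply_right, h'22, hD21]
    · rw [Equiv.swap_apply_of_ne_of_ne h1 h2]
      exact h'eq _ _ (by tauto)
  -- columns of D' are columns of D with j₁, j₂ swapped (for columns i₁, i₂)
  have hcol1 : ∀ j, D' j i₁ = D (Equiv.swap j₁ j₂ j) i₁ := by
    intro j
    by_cases h1 : j = j₁
    · subst h1; rw [Equiv.swap_apply_left, h'11, hD21]
    by_cases h2 : j = j₂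
    · subst h2; rw [Equiv.swap_apply_right, h'21, hD11]
    · rw [Equiv.swap_apply_of_ne_of_ne h1 h2]
      exact h'eq _ _ (by tauto)
  have hcol2 : ∀ j, D' j i₂ = D (Equiv.swap j₁ j₂ j) i₂ := by
    intro j
    by_cases h1 : j = j₁
    · subst h1; rw [Equiv.swap_apply_left, h'12, hD22]
    by_cases h2 : j = j₂
    · subst h2; rw [Equiv.swap_apply_right, h'22, hD12]
    · rw [Equiv.swap_apply_of_ne_of_ne h1 h2]
      exact h'eq _ _ (by tauto)
  refine ⟨?_, ?_, ?_, ?_⟩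
  · -- entries ≤ 1
    intro j i
    by_cases h1 : j = j₁
    · subst h1; rw [hrow1]; exact hD1 _ _
    by_cases h2 : j = j₂
    · subst h2; rw [hrow2]; exact hD1 _ _
    · rw [h'eq _ _ (by tauto)]; exact hD1 _ _
  · -- column sums = 1
    intro i
    by_cases h1 : i = i₁
    · rw [h1]
      calc ∑ j, D' j i₁ = ∑ j, D (Equiv.swap j₁ j₂ j) i₁ := by
            exact Finset.sum_congr rfl (fun j _ => hcol1 j)
        _ = ∑ j, D j i₁ := Equiv.sum_comp (Equiv.swap j₁ j₂) (fun j => D j i₁)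
        _ = 1 := hD2 i₁
    by_cases h2 : i = i₂
    · rw [h2]
      calc ∑ j, D' j i₂ = ∑ j, D (Equiv.swap j₁ j₂ j) i₂ := by
            exact Finset.sum_congr rfl (fun j _ => hcol2 j)
        _ = ∑ j, D j i₂ := Equiv.sum_comp (Equiv.swap j₁ j₂) (fun j => D j i₂)
        _ = 1 := hD2 i₂
    · calc ∑ j, D' j i = ∑ j, D j i :=
            Finset.sum_congr rfl (fun j _ => h'eq _ _ (by tauto))
        _ = 1 := hD2 i
  · -- row sums ≤ m
    intro j
    by_cases h1 : j = j₁
    · rw [h1]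
      calc ∑ i, D' j₁ i = ∑ i, D j₁ (Equiv.swap i₁ i₂ i) :=
            Finset.sum_congr rfl (fun i _ => hrow1 i)
        _ = ∑ i, D j₁ i := Equiv.sum_comp (Equiv.swap i₁ i₂) (fun i => D j₁ i)
        _ ≤ m := hD3 j₁
    by_cases h2 : j = j₂
    · rw [h2]
      calc ∑ i, D' j₂ i = ∑ i, D j₂ (Equiv.swap i₁ i₂ i) :=
            Finset.sum_congr rfl (fun i _ => hrow2 i)
        _ = ∑ i, D j₂ i := Equiv.sum_comp (Equiv.swap i₁ i₂) (fun i => D j₂ i)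
        _ ≤ m := hD3 j₂
    · calc ∑ i, D' j i = ∑ i, D j i :=
            Finset.sum_congr rfl (fun i _ => h'eq _ _ (by tauto))
        _ ≤ m := hD3 j
  · -- strict value improvement
    set s : Finset (Fin n₁ × Fin n₂) := {(j₁, i₁), (j₂, i₁), (j₁, i₂), (j₂, i₂)} with hs
    have hdiff : ∑ j, ∑ i, Y j i * (D' j i : ℝ) - ∑ j, ∑ i, Y j i * (D j i : ℝ)
        = ∑ p ∈ s, Y p.1 p.2 * ((D' p.1 p.2 : ℝ) - (D p.1 p.2 : ℝ)) := by
      rw [← Finset.sum_product' (f := fun j i => Y j i * (D' j i : ℝ)),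
          ← Finset.sum_product' (f := fun j i => Y j i * (D j i : ℝ)),
          ← Finset.sum_sub_distrib]
      simp_rw [← mul_sub]
      refine (Finset.sum_subset (Finset.subset_univ s) ?_).symm
      intro p _ hp
      simp only [hs, Finset.mem_insert, Finset.mem_singleton, Prod.ext_iff, not_or] at hp
      have : D' p.1 p.2 = D p.1 p.2 := h'eq _ _ (by tauto)
      rw [this]; ring
    have hsum : ∑ p ∈ s, Y p.1 p.2 * ((D' p.1 p.2 : ℝ) - (D p.1 p.2 : ℝ))
        = Y j₁ i₁ * ((D' j₁ i₁ : ℝ) - (D j₁ i₁ : ℝ))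
          + Y j₂ i₁ * ((D' j₂ i₁ : ℝ) - (D j₂ i₁ : ℝ))
          + Y j₁ i₂ * ((D' j₁ i₂ : ℝ) - (D j₁ i₂ : ℝ))
          + Y j₂ i₂ * ((D' j₂ i₂ : ℝ) - (D j₂ i₂ : ℝ)) := by
      rw [hs]
      rw [Finset.sum_insert (by simp [Prod.ext_iff, hj, hi]),
          Finset.sum_insert (by simp [Prod.ext_iff, hj, hi]),
          Finset.sum_insert (by simp [Prod.ext_iff, hj, hi]),
          Finset.sum_singleton]
      ring
    rw [h'11, h'21, h'12, h'22, hD11, hD21, hD12, hD22] at hsum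
    norm_num at hsum
    rw [hsum] at hdiff
    linarith
end
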